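/- Let x ∈ E be good and let y ∈ E. Set A = E(x,x) and A̲ = C(x,x). If x is rigid in C and Σ²x ≅ x, then Tor₂^A(C(x,y), ₐA̲) ≅ 0, where C(x,y) is a right A-module and A̲ is a left A-module. -/

import Mathlib

/-!
Shared framework: a `k`-linear Frobenius category `E` with projective objects `add r`,
its stable category `C = E̲` (realized as the category `SC` below), triangulated-structure
data on `C` (`TriData`), 2-Calabi–Yau via a Serre-duality pairing, rigid/maximal rigid
objects, and module structures over (stable) endomorphism rings.
-/

namespace Paper

open CategoryTheory Limits

universe v u

variable (E : Type u) [Category.{v} E] [Preadditive E] [HasFiniteBiproducts E] [HasBinaryBiproducts E]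

/-- An exact structure (in the sense of Quillen) on an additive category:
a distinguished class of kernel–cokernel pairs (`conflations`) satisfying the usual axioms. -/
structure ExactStr where
  /-- `conf i p` says that `x ⟶ᵢ y ⟶ₚ z` is a conflation. -/
  conf : ∀ ⦃x y z : E⦄, (x ⟶ y) → (y ⟶ z) → Prop
  conf_comp : ∀ ⦃x y z : E⦄ {i : x ⟶ y} {p : y ⟶ z}, conf i p → i ≫ p = 0
  conf_isKernel : ∀ ⦃x y z : E⦄ {i : x ⟶ y} {p : y ⟶ z} (h : conf i p),
    Nonempty (IsLimit (KernelFork.ofι i (conf_comp h)))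
  conf_isCokernel : ∀ ⦃x y z : E⦄ {i : x ⟶ y} {p : y ⟶ z} (h : conf i p),
    Nonempty (IsColimit (CokernelCofork.ofπ p (conf_comp h)))
  conf_split : ∀ x y : E, conf (biprod.inl : x ⟶ x ⊞ y) (biprod.snd : x ⊞ y ⟶ y)
  conf_iso : ∀ ⦃x y z x' y' z' : E⦄ {i : x ⟶ y} {p : y ⟶ z}
    (e₁ : x ≅ x') (e₂ : y ≅ y') (e₃ : z ≅ z'), conf i p →
    conf (e₁.inv ≫ i ≫ e₂.hom) (e₂.inv ≫ p ≫ e₃.hom)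
  defl_comp : ∀ ⦃x y z w v : E⦄ {i : x ⟶ y} {p : y ⟶ z} {j : v ⟶ z} {p' : z ⟶ w},
    conf i p → conf j p' → ∃ (u : E) (i'' : u ⟶ y), conf i'' (p ≫ p')
  infl_comp : ∀ ⦃x y z w v : E⦄ {i : x ⟶ y} {p : y ⟶ v} {i' : y ⟶ z} {p' : z ⟶ w},
    conf i p → conf i' p' → ∃ (u : E) (q : z ⟶ u), conf (i ≫ i') q
  conf_pullback : ∀ ⦃x y z : E⦄ {i : x ⟶ y} {p : y ⟶ z}, conf i p →
    ∀ ⦃z' : E⦄ (f : z' ⟶ z), ∃ (y' : E) (f' : y' ⟶ y) (p' : y' ⟶ z') (i' : x ⟶ y'),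
      conf i' p' ∧ IsPullback f' p' p f
  conf_pushout : ∀ ⦃x y z : E⦄ {i : x ⟶ y} {p : y ⟶ z}, conf i p →
    ∀ ⦃x' : E⦄ (f : x ⟶ x'), ∃ (y' : E) (f' : y ⟶ y') (i' : x' ⟶ y') (p' : y' ⟶ z),
      conf i' p' ∧ IsPushout f i i' f'

variable {E}

namespace ExactStr

variable (S : ExactStr E)

/-- `p` is a deflation (admissible epimorphism). -/
def IsDeflation {y z : E} (p : y ⟶ z) : Prop := ∃ (x : E) (i : x ⟶ y), S.conf i p

/-- `i` is an inflation (admissible monomorphism). -/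
def IsInflation {x y : E} (i : x ⟶ y) : Prop := ∃ (z : E) (p : y ⟶ z), S.conf i p

/-- Projective object relative to the exact structure. -/
def IsProj (P : E) : Prop :=
  ∀ ⦃y z : E⦄ (p : y ⟶ z), S.IsDeflation p → ∀ f : P ⟶ z, ∃ g : P ⟶ y, g ≫ p = f

/-- Injective object relative to the exact structure. -/
def IsInj (I : E) : Prop :=
  ∀ ⦃x y : E⦄ (i : x ⟶ y), S.IsInflation i → ∀ f : x ⟶ I, ∃ g : y ⟶ I, i ≫ g = f

end ExactStr

/-- `y ∈ add x`: `y` is a direct summand of a finite direct sum of copies of `x`. -/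
def InAdd (x y : E) : Prop :=
  ∃ (n : ℕ) (s : y ⟶ ⨁ (fun _ : Fin n => x)) (t : (⨁ fun _ : Fin n => x) ⟶ y), s ≫ t = 𝟙 y

variable (E) in
/-- A Frobenius exact category with projectives `= add r`:
enough projectives and injectives, projectives and injectives coincide,
and the projective objects are exactly the objects of `add r`. -/
structure Frobenius extends ExactStr E where
  enough_proj : ∀ x : E, ∃ (P : E) (p : P ⟶ x), toExactStr.IsProj P ∧ toExactStr.IsDeflation p
  enough_inj : ∀ x : E, ∃ (I : E) (i : x ⟶ I), toExactStr.IsInj I ∧ toExactStr.IsInflation i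
  proj_iff_inj : ∀ P : E, toExactStr.IsProj P ↔ toExactStr.IsInj P
  /-- the projective generator -/
  r : E
  proj_iff_add : ∀ P : E, toExactStr.IsProj P ↔ InAdd r P

namespace Frobenius

variable (k : Type) [Field k] [CategoryTheory.Linear k E]

variable (S : Frobenius E)

/-- An object of `E` is *good* if it is isomorphic in `E` to `x' ⊕ r` for some `x'`. -/
def Good (x : E) : Prop := ∃ x' : E, Nonempty (x ≅ x' ⊞ S.r)

/-- The `k`-submodule of `x ⟶ y` of morphisms factoring through a projective object. -/
def projIdeal (x y : E) : Submodule k (x ⟶ y) :=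
  Submodule.span k {f | ∃ (P : E) (g : x ⟶ P) (h : P ⟶ y), S.IsProj P ∧ f = g ≫ h}

lemma leftComp_projIdeal {x y z : E} (f : x ⟶ y) {g : y ⟶ z}
    (hg : g ∈ S.projIdeal k y z) : f ≫ g ∈ S.projIdeal k x z := by
  have : S.projIdeal k y z ≤ (S.projIdeal k x z).comap (Linear.leftComp k z f) := by
    rw [projIdeal, Submodule.span_le]
    rintro u ⟨P, a, b, hP, rfl⟩
    exact Submodule.subset_span ⟨P, f ≫ a, b, hP, by simp [Linear.leftComp]⟩
  exact this hg

lemma rightComp_projIdeal {x y z : E} {f : x ⟶ y} (hf : f ∈ S.projIdeal k x y)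
    (g : y ⟶ z) : f ≫ g ∈ S.projIdeal k x z := by
  have : S.projIdeal k x y ≤ (S.projIdeal k x z).comap (Linear.rightComp k x g) := by
    rw [projIdeal, Submodule.span_le]
    rintro u ⟨P, a, b, hP, rfl⟩
    exact Submodule.subset_span ⟨P, a, b ≫ g, hP, by simp [Linear.rightComp]⟩
  exact this hf

/-- Hom-spaces of the stable category `C = E̲`. -/
def SHom (x y : E) : Type _ := (x ⟶ y) ⧸ S.projIdeal k x y

instance (x y : E) : AddCommGroup (S.SHom k x y) :=
  inferInstanceAs (AddCommGroup ((x ⟶ y) ⧸ S.projIdeal k x y))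

instance (x y : E) : Module k (S.SHom k x y) :=
  inferInstanceAs (Module k ((x ⟶ y) ⧸ S.projIdeal k x y))

/-- Class of a morphism of `E` in the stable category. -/
def toS {x y : E} (f : x ⟶ y) : S.SHom k x y := Submodule.Quotient.mk f

lemma toS_surjective (x y : E) : Function.Surjective (S.toS k (x := x) (y := y)) :=
  Submodule.Quotient.mk_surjective _

end Frobenius

/-- The stable category `C = E̲` of the Frobenius category `E`:
same objects, morphisms modulo those factoring through a projective object. -/
def SC (_S : Frobenius E) (k : Type) [Field k] [CategoryTheory.Linear k E] : Type u := E

namespace SC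

variable {S : Frobenius E} {k : Type} [Field k] [CategoryTheory.Linear k E]

/-- The canonical identification of objects of `E` with objects of the stable category. -/
abbrev of (S : Frobenius E) (k : Type) [Field k] [CategoryTheory.Linear k E] (x : E) :
    SC S k := x

/-- The object of `E` underlying an object of the stable category. -/
abbrev un (x : SC S k) : E := x

instance : Category (SC S k) where
  Hom x y := S.SHom k x.un y.un
  id x := S.toS k (𝟙 x.un)
  comp {x y z} f g := by
    refine Quotient.liftOn₂ f g (fun f g => S.toS k (f ≫ g)) ?_
    intro a₁ b₁ a₂ b₂ h₁ h₂
    have h₁' : a₁ - a₂ ∈ S.projIdeal k x.un y.un :=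
      (Submodule.Quotient.eq _).mp (Quotient.sound h₁)
    have h₂' : b₁ - b₂ ∈ S.projIdeal k y.un z.un :=
      (Submodule.Quotient.eq _).mp (Quotient.sound h₂)
    show S.toS k (a₁ ≫ b₁) = S.toS k (a₂ ≫ b₂)
    unfold Frobenius.toS
    refine (Submodule.Quotient.eq _).mpr ?_
    have h : a₁ ≫ b₁ - a₂ ≫ b₂ = a₁ ≫ (b₁ - b₂) + (a₁ - a₂) ≫ b₂ := by
      simp only [Preadditive.comp_sub, Preadditive.sub_comp]; abel
    rw [h]
    exact add_mem (S.leftComp_projIdeal k _ h₂') (S.rightComp_projIdeal k h₁' _)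
  id_comp {x y} f := by
    obtain ⟨f, rfl⟩ := S.toS_surjective k _ _ f
    show S.toS k (𝟙 _ ≫ f) = S.toS k f
    rw [Category.id_comp]
  comp_id {x y} f := by
    obtain ⟨f, rfl⟩ := S.toS_surjective k _ _ f
    show S.toS k (f ≫ 𝟙 _) = S.toS k f
    rw [Category.comp_id]
  assoc {w x y z} f g h := by
    obtain ⟨f, rfl⟩ := S.toS_surjective k _ _ f
    obtain ⟨g, rfl⟩ := S.toS_surjective k _ _ g
    obtain ⟨h, rfl⟩ := S.toS_surjective k _ _ h
    show S.toS k ((f ≫ g) ≫ h) = S.toS k (f ≫ (g ≫ h))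
    rw [Category.assoc]

/-- The canonical functor map on morphisms: the class in the stable category of a
morphism of `E`, seen as a morphism of `SC S k`. -/
def toSC (S : Frobenius E) (k : Type) [Field k] [CategoryTheory.Linear k E]
    {x y : E} (f : x ⟶ y) : SC.of S k x ⟶ SC.of S k y := S.toS k f

lemma toSC_comp {x y z : E} (f : x ⟶ y) (g : y ⟶ z) :
    toSC S k f ≫ toSC S k g = toSC S k (f ≫ g) := rfl

lemma toSC_surjective (x y : E) :
    Function.Surjective (toSC S k (x := x) (y := y)) :=
  Submodule.Quotient.mk_surjective _

instance : Preadditive (SC S k) where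
  homGroup x y := inferInstanceAs (AddCommGroup (S.SHom k x.un y.un))
  add_comp x y z f f' g := by
    obtain ⟨f, rfl⟩ := S.toS_surjective k _ _ f
    obtain ⟨f', rfl⟩ := S.toS_surjective k _ _ f'
    obtain ⟨g, rfl⟩ := S.toS_surjective k _ _ g
    show S.toS k ((f + f') ≫ g) = S.toS k (f ≫ g) + S.toS k (f' ≫ g)
    rw [Preadditive.add_comp]; rfl
  comp_add x y z f g g' := by
    obtain ⟨f, rfl⟩ := S.toS_surjective k _ _ f
    obtain ⟨g, rfl⟩ := S.toS_surjective k _ _ g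
    obtain ⟨g', rfl⟩ := S.toS_surjective k _ _ g'
    show S.toS k (f ≫ (g + g')) = S.toS k (f ≫ g) + S.toS k (f ≫ g')
    rw [Preadditive.comp_add]; rfl

instance : CategoryTheory.Linear k (SC S k) where
  homModule x y := inferInstanceAs (Module k (S.SHom k x.un y.un))
  smul_comp x y z r f g := by
    obtain ⟨f, rfl⟩ := S.toS_surjective k _ _ f
    obtain ⟨g, rfl⟩ := S.toS_surjective k _ _ g
    show S.toS k ((r • f) ≫ g) = r • S.toS k (f ≫ g)
    rw [Linear.smul_comp]; rfl
  comp_smul x y z f r g := by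
    obtain ⟨f, rfl⟩ := S.toS_surjective k _ _ f
    obtain ⟨g, rfl⟩ := S.toS_surjective k _ _ g
    show S.toS k (f ≫ (r • g)) = r • S.toS k (f ≫ g)
    rw [Linear.comp_smul]; rfl

end SC

end Paper

section EndModules

namespace Paper

open CategoryTheory

/-- In any preadditive category, `x ⟶ y` is a right module over `End x`
(i.e. a left module over `(End x)ᵐᵒᵖ`), acting by precomposition. -/
instance moduleEndLeftOp {C : Type*} [Category C] [Preadditive C] {x y : C} :
    Module (End x)ᵐᵒᵖ (x ⟶ y) where
  smul a f := a.unop ≫ f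
  one_smul f := Category.id_comp f
  mul_smul a b f := by
    show (MulOpposite.unop a ≫ MulOpposite.unop b) ≫ f =
      MulOpposite.unop a ≫ MulOpposite.unop b ≫ f
    rw [Category.assoc]
  smul_zero a := Limits.comp_zero
  smul_add a f g := Preadditive.comp_add _ _ _ _ _ _
  add_smul a b f := Preadditive.add_comp _ _ _ _ _ _
  zero_smul f := Limits.zero_comp

lemma op_smul_def {C : Type*} [Category C] [Preadditive C] {x y : C}
    (a : (End x)ᵐᵒᵖ) (f : x ⟶ y) : a • f = a.unop ≫ f := rfl

lemma end_smul_def {C : Type*} [Category C] [Preadditive C] {x y : C}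
    (a : End y) (f : x ⟶ y) : a • f = f ≫ a := rfl

/-- Postcomposition as a map of right `End x`-modules. -/
def postcompL {C : Type*} [Category C] [Preadditive C] {x y z : C} (f : y ⟶ z) :
    (x ⟶ y) →ₗ[(End x)ᵐᵒᵖ] (x ⟶ z) where
  toFun g := g ≫ f
  map_add' g g' := Preadditive.add_comp _ _ _ _ _ _
  map_smul' a g := by
    show (a.unop ≫ g) ≫ f = a.unop ≫ g ≫ f
    rw [Category.assoc]

/-- Precomposition as a map of left `End z`-modules. -/
def precompL {C : Type*} [Category C] [Preadditive C] {x y z : C} (f : x ⟶ y) :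
    (y ⟶ z) →ₗ[End z] (x ⟶ z) where
  toFun g := f ≫ g
  map_add' g g' := Preadditive.comp_add _ _ _ _ _ _
  map_smul' a g := by
    show f ≫ g ≫ a = (f ≫ g) ≫ a
    rw [Category.assoc]

end Paper

end EndModules

namespace Paper

open CategoryTheory Limits

section Tri

variable {E : Type u} [Category.{v} E] [Preadditive E] [HasFiniteBiproducts E]
  [HasBinaryBiproducts E]

/-- The data and axioms of the triangulated structure on the stable category `C = SC S k`
of the Frobenius category `E` (suspension `Σ`, distinguished triangles), together with the
assumptions that `C` is 2-Calabi–Yau (formulated via a nondegenerate associative Serre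
pairing `C(x,y) × C(y,Σ²x) → k`, functorial in both variables), Hom-finite over `k`, and
has split idempotents. -/
structure TriData (S : Frobenius E) (k : Type) [Field k] [CategoryTheory.Linear k E] where
  /-- the suspension functor -/
  susp : SC S k ⥤ SC S k
  equiv : susp.IsEquivalence
  additive : susp.Additive
  linear : Functor.Linear k susp
  /-- distinguished triangles `x ⟶ y ⟶ z ⟶ Σ x` -/
  dtri : ∀ ⦃x y z : SC S k⦄, (x ⟶ y) → (y ⟶ z) → (z ⟶ susp.obj x) → Prop
  dtri_comp_zero : ∀ ⦃x y z : SC S k⦄ {f : x ⟶ y} {g : y ⟶ z} {h : z ⟶ susp.obj x},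
    dtri f g h → f ≫ g = 0
  dtri_rot : ∀ ⦃x y z : SC S k⦄ {f : x ⟶ y} {g : y ⟶ z} {h : z ⟶ susp.obj x},
    dtri f g h → dtri g h (-(susp.map f))
  dtri_complete : ∀ ⦃x y : SC S k⦄ (f : x ⟶ y),
    ∃ (z : SC S k) (g : y ⟶ z) (h : z ⟶ susp.obj x), dtri f g h
  dtri_ext : ∀ ⦃x y z x' y' z' : SC S k⦄
    {f : x ⟶ y} {g : y ⟶ z} {h : z ⟶ susp.obj x}
    {f' : x' ⟶ y'} {g' : y' ⟶ z'} {h' : z' ⟶ susp.obj x'},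
    dtri f g h → dtri f' g' h' → ∀ (a : x ⟶ x') (b : y ⟶ y'), f ≫ b = a ≫ f' →
      ∃ c : z ⟶ z', g ≫ c = b ≫ g' ∧ h ≫ susp.map a = c ≫ h'
  /-- conflations of `E` induce distinguished triangles in the stable category -/
  conf_dtri : ∀ ⦃x y z : E⦄ {i : x ⟶ y} {p : y ⟶ z}, S.conf i p →
    ∃ h : SC.of S k z ⟶ susp.obj (SC.of S k x), dtri (SC.toSC S k i) (SC.toSC S k p) h
  /-- the 2-Calabi–Yau (Serre duality) pairing `C(x,y) ⊗ C(y,Σ²x) → k` -/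
  pair : ∀ (x y : SC S k), (x ⟶ y) →ₗ[k] (y ⟶ susp.obj (susp.obj x)) →ₗ[k] k
  pair_assoc : ∀ ⦃x y z : SC S k⦄ (f : x ⟶ y) (g : y ⟶ z)
    (h : z ⟶ susp.obj (susp.obj x)), pair x z (f ≫ g) h = pair x y f (g ≫ h)
  pair_nondeg_left : ∀ ⦃x y : SC S k⦄ (f : x ⟶ y), (∀ g, pair x y f g = 0) → f = 0
  pair_nondeg_right : ∀ ⦃x y : SC S k⦄ (g : y ⟶ susp.obj (susp.obj x)),
    (∀ f, pair x y f g = 0) → g = 0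
  /-- `C` is Hom-finite -/
  homFinite : ∀ x y : SC S k, FiniteDimensional k (x ⟶ y)
  /-- `C` has split idempotents -/
  idem : IsIdempotentComplete (SC S k)

namespace TriData

variable {k : Type} [Field k] [CategoryTheory.Linear k E] {S : Frobenius E}
variable (T : TriData S k)

/-- `x` is rigid: `C(x, Σx) = 0`. -/
def Rigid (x : SC S k) : Prop := ∀ f : x ⟶ T.susp.obj x, f = 0

/-- `y ∈ add x` in the stable category. -/
def AddSummand (_T : TriData S k) (x y : SC S k) : Prop :=
  ∃ (n : ℕ) (s : y ⟶ SC.of S k (⨁ fun _ : Fin n => x.un))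
    (t : SC.of S k (⨁ fun _ : Fin n => x.un) ⟶ y), s ≫ t = 𝟙 y

/-- `x` is maximal rigid: it is rigid and `C(x ⊕ y, Σ(x ⊕ y)) = 0` implies `y ∈ add x`
(formulated componentwise). -/
def MaxRigid (x : SC S k) : Prop :=
  T.Rigid x ∧ ∀ y : SC S k, T.Rigid y → (∀ f : x ⟶ T.susp.obj y, f = 0) →
    (∀ f : y ⟶ T.susp.obj x, f = 0) → T.AddSummand x y

/-- `Σ² x ≅ x` in the stable category. -/
def SuspSqFix (x : SC S k) : Prop := Nonempty (T.susp.obj (T.susp.obj x) ≅ x)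

end TriData

end Tri

/-- A ring is self-injective if it is injective as a (left) module over itself. -/
def IsSelfInjectiveRing (A : Type*) [Ring A] : Prop := Module.Injective A A

end Paper

namespace Paper

open CategoryTheory Limits

noncomputable section ATensor

set_option linter.unusedSectionVars false

variable (k : Type*) [CommRing k]
variable (A : Type*) [Ring A] [Algebra k A]
variable (M : Type*) [AddCommGroup M] [Module k M] [Module Aᵐᵒᵖ M]
variable (N : Type*) [AddCommGroup N] [Module k N] [Module A N]

/-- The relations defining the tensor product `M ⊗_A N` of a right `A`-module and a
left `A`-module over the (possibly noncommutative) `k`-algebra `A`, as a quotient of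
`M ⊗_k N`. -/
def atensorRel : Submodule k (TensorProduct k M N) :=
  Submodule.span k {t | ∃ (m : M) (a : A) (n : N),
    t = (MulOpposite.op a • m) ⊗ₜ[k] n - m ⊗ₜ[k] (a • n)}

/-- The tensor product `M ⊗_A N` of a right `A`-module and a left `A`-module over the
(possibly noncommutative) `k`-algebra `A`. -/
def ATensor : Type _ := TensorProduct k M N ⧸ atensorRel k A M N

instance : AddCommGroup (ATensor k A M N) :=
  inferInstanceAs (AddCommGroup (TensorProduct k M N ⧸ atensorRel k A M N))

instance : Module k (ATensor k A M N) :=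
  inferInstanceAs (Module k (TensorProduct k M N ⧸ atensorRel k A M N))

namespace ATensor

/-- The canonical balanced bilinear map `M × N → M ⊗_A N`. -/
def mkBilin : M →ₗ[k] N →ₗ[k] ATensor k A M N :=
  (TensorProduct.mk k M N).compr₂ (atensorRel k A M N).mkQ

/-- `m ⊗ n` in `M ⊗_A N`. -/
def mk (m : M) (n : N) : ATensor k A M N := mkBilin k A M N m n

variable {k A M N}

lemma mk_smul (m : M) (a : A) (n : N) :
    mk k A M N (MulOpposite.op a • m) n = mk k A M N m (a • n) := by
  unfold mk mkBilin
  show Submodule.Quotient.mk _ = Submodule.Quotient.mk _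
  rw [Submodule.Quotient.eq]
  exact Submodule.subset_span ⟨m, a, n, rfl⟩

lemma mk_surjective_span (t : ATensor k A M N) :
    ∃ s : TensorProduct k M N, Submodule.Quotient.mk s = t :=
  Submodule.Quotient.mk_surjective _ t

variable {P : Type*} [AddCommGroup P] [Module k P]

/-- Lift a balanced `k`-bilinear map to the tensor product `M ⊗_A N`. -/
def lift (φ : M →ₗ[k] N →ₗ[k] P)
    (bal : ∀ (m : M) (a : A) (n : N), φ (MulOpposite.op a • m) n = φ m (a • n)) :
    ATensor k A M N →ₗ[k] P := by
  refine Submodule.liftQ _ (TensorProduct.lift φ) ?_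
  rw [atensorRel, Submodule.span_le]
  rintro t ⟨m, a, n, rfl⟩
  simp only [SetLike.mem_coe, LinearMap.mem_ker, map_sub, TensorProduct.lift.tmul]
  rw [bal m a n, sub_self]

@[simp] lemma lift_mk (φ : M →ₗ[k] N →ₗ[k] P) (bal) (m : M) (n : N) :
    lift φ bal (mk k A M N m n) = φ m n := rfl

lemma hom_ext {f g : ATensor k A M N →ₗ[k] P}
    (h : ∀ m n, f (mk k A M N m n) = g (mk k A M N m n)) : f = g := by
  apply Submodule.linearMap_qext
  apply TensorProduct.ext'
  intro m n
  exact h m n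

variable {M' : Type*} [AddCommGroup M'] [Module k M'] [Module Aᵐᵒᵖ M']
variable {N' : Type*} [AddCommGroup N'] [Module k N'] [Module A N']

/-- Functoriality of `M ⊗_A N` in the right `A`-module variable. -/
def mapLeft (f : M →ₗ[k] M') (hf : ∀ (a : A) (m : M),
    f (MulOpposite.op a • m) = MulOpposite.op a • f m) :
    ATensor k A M N →ₗ[k] ATensor k A M' N :=
  lift ((mkBilin k A M' N).comp f) (by
    intro m a n
    simp only [LinearMap.comp_apply, hf]
    exact mk_smul _ _ _)

/-- Functoriality of `M ⊗_A N` in the left `A`-module variable. -/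
def mapRight (g : N →ₗ[k] N') (hg : ∀ (a : A) (n : N), g (a • n) = a • g n) :
    ATensor k A M N →ₗ[k] ATensor k A M N' :=
  lift ((mkBilin k A M N').compl₂ g) (by
    intro m a n
    simp only [LinearMap.compl₂_apply, hg]
    exact mk_smul _ _ _)

@[simp] lemma mapLeft_mk (f : M →ₗ[k] M') (hf) (m : M) (n : N) :
    mapLeft (N := N) f hf (mk k A M N m n) = mk k A M' N (f m) n := rfl

@[simp] lemma mapRight_mk (g : N →ₗ[k] N') (hg) (m : M) (n : N) :
    mapRight (M := M) g hg (mk k A M N m n) = mk k A M N' m (g n) := rfl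

end ATensor

end ATensor

end Paper

namespace Paper

open CategoryTheory Limits

section StableModules

variable {E : Type u} [Category.{v} E] [Preadditive E] [HasFiniteBiproducts E]
  [HasBinaryBiproducts E]
variable (k : Type) [Field k] [CategoryTheory.Linear k E]
variable (S : Frobenius E)

namespace Frobenius

/-- Precomposition on stable Hom spaces. -/
def preS {x' x y : E} (a : x' ⟶ x) : S.SHom k x y →ₗ[k] S.SHom k x' y :=
  Submodule.mapQ _ _ (Linear.leftComp k y a)
    (fun f hf => S.leftComp_projIdeal k a hf)

/-- Postcomposition on stable Hom spaces. -/
def postS {x y y' : E} (b : y ⟶ y') : S.SHom k x y →ₗ[k] S.SHom k x y' :=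
  Submodule.mapQ _ _ (Linear.rightComp k x b)
    (fun f hf => S.rightComp_projIdeal k hf b)

@[simp] lemma preS_toS {x' x y : E} (a : x' ⟶ x) (f : x ⟶ y) :
    S.preS k a (S.toS k f) = S.toS k (a ≫ f) := rfl

@[simp] lemma postS_toS {x y y' : E} (b : y ⟶ y') (f : x ⟶ y) :
    S.postS k b (S.toS k f) = S.toS k (f ≫ b) := rfl

/-- `C(x,y)` is a right `E(x,x)`-module. -/
instance shomModuleOp (x y : E) : Module (End x)ᵐᵒᵖ (S.SHom k x y) where
  smul a u := S.preS k a.unop u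
  one_smul u := by
    obtain ⟨f, rfl⟩ := S.toS_surjective k _ _ u
    show S.toS k ((𝟙 x : End x) ≫ f) = S.toS k f
    rw [Category.id_comp]
  mul_smul a b u := by
    obtain ⟨f, rfl⟩ := S.toS_surjective k _ _ u
    show S.toS k ((MulOpposite.unop a ≫ MulOpposite.unop b) ≫ f)
      = S.toS k (MulOpposite.unop a ≫ MulOpposite.unop b ≫ f)
    rw [Category.assoc]
  smul_zero a := map_zero _
  smul_add a u v := map_add _ _ _
  add_smul a b u := by
    obtain ⟨f, rfl⟩ := S.toS_surjective k _ _ u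
    show S.toS k ((MulOpposite.unop a + MulOpposite.unop b) ≫ f)
      = S.toS k (MulOpposite.unop a ≫ f) + S.toS k (MulOpposite.unop b ≫ f)
    rw [Preadditive.add_comp]
    rfl
  zero_smul u := by
    obtain ⟨f, rfl⟩ := S.toS_surjective k _ _ u
    show S.toS k ((0 : x ⟶ x) ≫ f) = 0
    rw [Limits.zero_comp]
    rfl

lemma shom_op_smul_def {x y : E} (a : (End x)ᵐᵒᵖ) (u : S.SHom k x y) :
    a • u = S.preS k a.unop u := rfl

/-- `C(x,y)` is a left `E(y,y)`-module (with the `End`-multiplication convention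
`a * b = b ≫ a`, so the action is by postcomposition). -/
instance shomModuleEnd (x y : E) : Module (End y) (S.SHom k x y) where
  smul b u := S.postS k b u
  one_smul u := by
    obtain ⟨f, rfl⟩ := S.toS_surjective k _ _ u
    show S.toS k (f ≫ (𝟙 y : End y)) = S.toS k f
    rw [Category.comp_id]
  mul_smul a b u := by
    obtain ⟨f, rfl⟩ := S.toS_surjective k _ _ u
    show S.toS k (f ≫ (b ≫ a)) = S.toS k ((f ≫ b) ≫ a)
    rw [Category.assoc]
  smul_zero a := map_zero _
  smul_add a u v := map_add _ _ _
  add_smul a b u := by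
    obtain ⟨f, rfl⟩ := S.toS_surjective k _ _ u
    show S.toS k (f ≫ (a + b)) = S.toS k (f ≫ a) + S.toS k (f ≫ b)
    rw [Preadditive.comp_add]
    rfl
  zero_smul u := by
    obtain ⟨f, rfl⟩ := S.toS_surjective k _ _ u
    show S.toS k (f ≫ (0 : y ⟶ y)) = 0
    rw [Limits.comp_zero]
    rfl

lemma shom_end_smul_def {x y : E} (b : End y) (u : S.SHom k x y) :
    b • u = S.postS k b u := rfl

end Frobenius

end StableModules

section TensorFunctor

variable (A : Type v) [Ring A]
variable (M : Type v) [AddCommGroup M] [Module Aᵐᵒᵖ M]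

/-- The functor `M ⊗_A — : A-Mod ⥤ Ab` (realized with `ℤ`-coefficients),
for a right `A`-module `M`. -/
noncomputable def atensorFunctor : ModuleCat.{v} A ⥤ ModuleCat.{v} ℤ where
  obj N := ModuleCat.of ℤ (ATensor ℤ A M N)
  map {N N'} g := ModuleCat.ofHom (ATensor.mapRight (M := M) (g.hom.toAddMonoidHom.toIntLinearMap)
    (fun a n => map_smul g.hom a n))
  map_id N := by
    apply ModuleCat.hom_ext
    apply ATensor.hom_ext
    intro m n
    rfl
  map_comp {N N' N''} g h := by
    apply ModuleCat.hom_ext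
    apply ATensor.hom_ext
    intro m n
    rfl

noncomputable instance : (atensorFunctor.{v} A M).Additive where
  map_add := by
    intros N N' g h
    apply ModuleCat.hom_ext
    apply ATensor.hom_ext
    intro m n
    show ATensor.mk ℤ A M _ m ((g + h).hom n) =
      ATensor.mk ℤ A M _ m (g.hom n) + ATensor.mk ℤ A M _ m (h.hom n)
    rw [ModuleCat.hom_add, LinearMap.add_apply]
    exact map_add (ATensor.mkBilin ℤ A M _ m) _ _

end TensorFunctor

end Paper

set_option linter.unusedSectionVars false


/-!
Let `A = E(x,x)` and choose conflations `x ↣ i₀ ↠ z` and `z ↣ i₁ ↠ z'` with `i₀`, `i₁`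
projective. Then `E(i₁,x) → E(i₀,x) → E(x,x) → C(x,x) → 0` begins a projective resolution of
the left `A`-module `A̲`. Each `E(i,x)` with `i ∈ add r` is a summand of some `Aⁿ`, because `r`
is a summand of `x`. Exactness at `E(x,x)` holds because maps that factor through a projective
extend along the inflation `x ↣ i₀`. Exactness at `E(i₀,x)` needs every map `z → x` to vanish in
`C`: the triangle `i₀ → z → Σx → Σi₀` makes such a map factor through `Σx`, and
`C(Σx,x) ≅ C(Σx,Σ²x) ≅ C(x,Σx) = 0` by `Σ²x ≅ x` and rigidity.
In degree two, `C(x,y) ⊗_A E(i₁,x) = 0`: `E(i₁,x)` is generated by `e • E(i₁,x)` for the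
idempotent `e ∈ A` of the summand `r`, and `e` kills `C(x,y)` since it factors through `r`.
-/

open CategoryTheory Limits

namespace Paper

section AddHom

variable {C : Type*} [Category C] [Preadditive C] [HasFiniteBiproducts C]

lemma inAdd_self (x : C) : InAdd x x :=
  ⟨1, biproduct.ι (fun _ : Fin 1 => x) 0, biproduct.π _ 0, biproduct.ι_π_self _ 0⟩

lemma InAdd.of_retract {ρ x w : C} (ι : ρ ⟶ x) (π : x ⟶ ρ) (h : ι ≫ π = 𝟙 ρ)
    (hw : InAdd ρ w) : InAdd x w := by
  obtain ⟨n, s, t, hst⟩ := hw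
  have hmap : (biproduct.map fun _ : Fin n => ι) ≫ (biproduct.map fun _ => π) = 𝟙 _ := by
    ext; simp [h]
  exact ⟨n, s ≫ biproduct.map fun _ => ι, biproduct.map (fun _ => π) ≫ t, by
    simp [reassoc_of% hmap, hst]⟩

lemma InAdd.sum_comp {ρ w : C} {n : ℕ} {s : w ⟶ ⨁ fun _ : Fin n => ρ}
    {t : (⨁ fun _ : Fin n => ρ) ⟶ w} (hst : s ≫ t = 𝟙 w) {y : C} (g : w ⟶ y) :
    ∑ i, (s ≫ biproduct.π (fun _ : Fin n => ρ) i) ≫ biproduct.ι (fun _ : Fin n => ρ) i ≫ t ≫ g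
      = g := by
  simp_rw [← Category.assoc, ← Preadditive.sum_comp, Category.assoc, ← Preadditive.comp_sum,
    biproduct.total, Category.comp_id, reassoc_of% hst]

lemma InAdd.projective_hom {x w : C} (hw : InAdd x w) :
    Projective (ModuleCat.of (End x) (w ⟶ x)) := by
  obtain ⟨n, s, t, hst⟩ := hw
  let u : (w ⟶ x) →ₗ[End x] (Fin n → End x) :=
    LinearMap.pi fun i => precompL (biproduct.ι (fun _ : Fin n => x) i ≫ t)
  let v : (Fin n → End x) →ₗ[End x] (w ⟶ x) :=
    ∑ i, (precompL (s ≫ biproduct.π (fun _ : Fin n => x) i)).comp (LinearMap.proj i)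
  refine (IsProjective.iff_projective _).mp (Module.Projective.of_split u v ?_)
  exact LinearMap.ext fun g => by simpa [u, v, precompL] using InAdd.sum_comp hst g

lemma InAdd.mem_span_smul {ρ x w : C} (ι : ρ ⟶ x) (π : x ⟶ ρ) (h : ι ≫ π = 𝟙 ρ)
    (hw : InAdd ρ w) (g : w ⟶ x) :
    g ∈ Submodule.span (End x) (Set.range (· ≫ π ≫ ι : (w ⟶ x) → (w ⟶ x))) := by
  obtain ⟨n, s, t, hst⟩ := hw
  rw [← InAdd.sum_comp hst g]
  refine Submodule.sum_mem _ fun i _ => ?_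
  have hi : (s ≫ biproduct.π (fun _ : Fin n => ρ) i) ≫ biproduct.ι (fun _ : Fin n => ρ) i ≫ t ≫ g
      = ((s ≫ biproduct.π (fun _ : Fin n => ρ) i ≫ ι) ≫ π ≫ ι) ≫
        (π ≫ biproduct.ι (fun _ : Fin n => ρ) i ≫ t ≫ g) := by
    simp [reassoc_of% h]
  rw [hi]
  exact Submodule.smul_mem _ (show End x from _) (Submodule.subset_span ⟨_, rfl⟩)

end AddHom

namespace ATensor

variable {k A M N : Type*} [CommRing k] [Ring A] [Algebra k A]
  [AddCommGroup M] [Module k M] [Module Aᵐᵒᵖ M] [AddCommGroup N] [Module k N] [Module A N]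

lemma subsingleton_of_smul_eq_zero (e : A) (hM : ∀ m : M, MulOpposite.op e • m = 0)
    (hN : ∀ n : N, n ∈ Submodule.span A (Set.range (e • · : N → N))) :
    Subsingleton (ATensor k A M N) := by
  have hmk : ∀ m n, mk k A M N m n = 0 := by
    intro m n
    induction hN n using Submodule.span_induction generalizing m with
    | mem _ hn =>
      obtain ⟨n, rfl⟩ := hn
      rw [← mk_smul, hM, mk, map_zero, LinearMap.zero_apply]
    | zero => rw [mk, map_zero]
    | add _ _ _ _ h₁ h₂ => rw [mk, map_add, ← mk, ← mk, h₁, h₂, add_zero]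
    | smul a _ _ h => rw [← mk_smul, h]
  have hid : (LinearMap.id : ATensor k A M N →ₗ[k] _) = 0 := hom_ext hmk
  exact subsingleton_of_forall_eq 0 fun t => LinearMap.congr_fun hid t

end ATensor

section Resolution

variable {C : Type*} [Category C] [Abelian C] [EnoughProjectives C]
  {N X₀ X₁ X₂ : C} {d₂ : X₂ ⟶ X₁} {d₁ : X₁ ⟶ X₀} {ε : X₀ ⟶ N}

noncomputable def complexOfExact (w₂₁ : d₂ ≫ d₁ = 0) : ChainComplex C ℕ :=
  ChainComplex.mk X₀ X₁ X₂ d₁ d₂ w₂₁ fun S => ⟨Projective.syzygies S.f, Projective.d S.f,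
    (Category.assoc _ _ _).trans ((congrArg _ (kernel.condition S.f)).trans comp_zero)⟩

lemma complexOfExact_d_1_0 (w₂₁ : d₂ ≫ d₁ = 0) : (complexOfExact w₂₁).d 1 0 = d₁ :=
  ChainComplex.mk_d_1_0 ..

noncomputable def projectiveResolutionOfExact [Projective X₀] [Projective X₁] [Projective X₂]
    {w₂₁ : d₂ ≫ d₁ = 0} {w₁₀ : d₁ ≫ ε = 0} (h₁ : (ShortComplex.mk d₂ d₁ w₂₁).Exact)
    (h₀ : (ShortComplex.mk d₁ ε w₁₀).Exact) [Epi ε] : ProjectiveResolution N where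
  complex := complexOfExact w₂₁
  projective
    | 0 | 1 | 2 => by assumption
    | _ + 3 => by dsimp [complexOfExact, ChainComplex.mk, ChainComplex.mkAux]; infer_instance
  π := (ChainComplex.toSingle₀Equiv _ _).symm ⟨ε, by rw [complexOfExact_d_1_0]; exact w₁₀⟩
  quasiIso := ⟨fun n => by
    match n with
    | 0 =>
      rw [ChainComplex.quasiIsoAt₀_iff, ShortComplex.quasiIso_iff_of_zeros' _ rfl rfl rfl]
      refine (ShortComplex.exact_and_epi_g_iff_of_iso ?_).2 ⟨h₀, ‹_›⟩
      refine ShortComplex.isoMk (Iso.refl _) (Iso.refl _) (Iso.refl _) ?_ ?_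
      · dsimp
        simp only [HomologicalComplex.shortComplexFunctor'_obj_f, complexOfExact_d_1_0]
        exact (Category.id_comp _).trans (Category.comp_id _).symm
      · dsimp
        simp only [HomologicalComplex.shortComplexFunctor'_map_τ₂]
        erw [Category.id_comp, Category.comp_id, ChainComplex.toSingle₀Equiv_symm_apply_f_zero]
    | n + 1 =>
      rw [quasiIsoAt_iff_exactAt' _ _ (ChainComplex.exactAt_succ_single_obj _ _),
        HomologicalComplex.exactAt_iff' _ (n + 2) (n + 1) n (by simp) (by simp)]
      dsimp only [complexOfExact, HomologicalComplex.sc', HomologicalComplex.shortComplexFunctor']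
      rw [← ChainComplex.mkAux_eq_shortComplex_mk_d_comp_d]
      match n with
      | 0 => exact h₁
      | n + 1 => exact exact_d_f _⟩

lemma isZero_leftDerived_obj_two_of_exact {D : Type*} [Category D] [Abelian D]
    [Projective X₀] [Projective X₁] [Projective X₂]
    {w₂₁ : d₂ ≫ d₁ = 0} {w₁₀ : d₁ ≫ ε = 0} (h₁ : (ShortComplex.mk d₂ d₁ w₂₁).Exact)
    (h₀ : (ShortComplex.mk d₁ ε w₁₀).Exact) [Epi ε] (F : C ⥤ D) [F.Additive]
    (hF : IsZero (F.obj X₂)) : IsZero ((F.leftDerived 2).obj N) := by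
  refine IsZero.of_iso ?_ ((projectiveResolutionOfExact h₁ h₀).isoLeftDerivedObj F 2)
  refine (HomologicalComplex.exactAt_iff_isZero_homology _ 2).mp ?_
  rw [HomologicalComplex.exactAt_iff]
  exact ShortComplex.exact_of_isZero_X₂ _ hF

end Resolution

namespace TriData

variable {E : Type u} [Category.{v} E] [Preadditive E] [HasFiniteBiproducts E]
  [HasBinaryBiproducts E] {k : Type} [Field k] [CategoryTheory.Linear k E] {S : Frobenius E}
  (T : TriData S k)

lemma exists_comp_eq_of_comp_eq_zero {x y z : SC S k} {f : x ⟶ y} {g : y ⟶ z}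
    {h : z ⟶ T.susp.obj x} (hT : T.dtri f g h) {w : SC S k} (b : y ⟶ w) (hb : f ≫ b = 0) :
    ∃ c : z ⟶ w, g ≫ c = b := by
  have := T.equiv
  have := T.additive
  let w' := T.susp.objPreimage w
  let e : T.susp.obj w' ≅ w := T.susp.objObjPreimageIso w
  -- rotating the split triangle twice gives one whose second map `Σ inl` is a split mono
  obtain ⟨h', hsplit⟩ := T.conf_dtri (S.conf_split w'.un w'.un)
  obtain ⟨c, hc, -⟩ := T.dtri_ext hT (T.dtri_rot (T.dtri_rot hsplit)) 0 (-(b ≫ e.inv))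
    (by rw [Preadditive.comp_neg, reassoc_of% hb]; simp)
  have hretr : T.susp.map (SC.toSC S k (biprod.inl : w'.un ⟶ w'.un ⊞ w'.un)) ≫
      T.susp.map (SC.toSC S k biprod.fst) = 𝟙 _ := by
    rw [← T.susp.map_comp, SC.toSC_comp, biprod.inl_fst]
    exact T.susp.map_id _
  refine ⟨c ≫ T.susp.map (SC.toSC S k biprod.fst) ≫ e.hom, ?_⟩
  rw [reassoc_of% hc]
  simp [reassoc_of% hretr]

lemma Rigid.eq_zero_of_suspSqFix {x : SC S k} (hx : T.Rigid x) (hsq : T.SuspSqFix x)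
    (f : T.susp.obj x ⟶ x) : f = 0 := by
  have := T.equiv
  have := T.additive
  obtain ⟨θ⟩ := hsq
  obtain ⟨g, hg⟩ := T.susp.map_surjective (f ≫ θ.inv)
  rw [← cancel_mono θ.inv, ← hg, hx g, T.susp.map_zero, zero_comp]

end TriData

namespace Frobenius

variable {E : Type u} [Category.{v} E] [Preadditive E] [HasFiniteBiproducts E]
  [HasBinaryBiproducts E] {k : Type} [Field k] [CategoryTheory.Linear k E] (S : Frobenius E)

lemma isProj_r : S.IsProj S.r := (S.proj_iff_add S.r).mpr (inAdd_self S.r)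

lemma exists_conf_isProj (x : E) :
    ∃ (i z : E) (ι : x ⟶ i) (p : i ⟶ z), S.IsProj i ∧ S.conf ι p := by
  obtain ⟨i, ι, hi, z, p, hconf⟩ := S.enough_inj x
  exact ⟨i, z, ι, p, (S.proj_iff_inj i).mpr hi, hconf⟩

variable {S} in
lemma Good.exists_retract {x : E} (hx : S.Good x) :
    ∃ (ι : S.r ⟶ x) (π : x ⟶ S.r), ι ≫ π = 𝟙 S.r := by
  obtain ⟨x', ⟨e⟩⟩ := hx
  exact ⟨biprod.inr ≫ e.inv, e.hom ≫ biprod.snd, by simp⟩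

variable {S} in
lemma Good.inAdd_of_isProj {x w : E} (hx : S.Good x) (hw : S.IsProj w) : InAdd x w := by
  obtain ⟨ι, π, h⟩ := hx.exists_retract
  exact InAdd.of_retract ι π h ((S.proj_iff_add w).mp hw)

lemma comp_mem_projIdeal {w P y : E} (hP : S.IsProj P) (a : w ⟶ P) (b : P ⟶ y) :
    a ≫ b ∈ S.projIdeal k w y :=
  Submodule.subset_span ⟨P, a, b, hP, rfl⟩

lemma exists_comp_eq_of_mem_projIdeal {w i y : E} {ι : w ⟶ i} (hι : S.IsInflation ι)
    {f : w ⟶ y} (hf : f ∈ S.projIdeal k w y) : ∃ g : i ⟶ y, ι ≫ g = f := by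
  suffices S.projIdeal k w y ≤ LinearMap.range (Linear.leftComp k y ι) from this hf
  rw [projIdeal, Submodule.span_le]
  rintro _ ⟨P, a, b, hP, rfl⟩
  obtain ⟨a', ha'⟩ := (S.proj_iff_inj P).mp hP ι hι a
  exact ⟨a' ≫ b, by simp [Linear.leftComp, reassoc_of% ha']⟩

lemma mem_projIdeal_of_conf (T : TriData S k) {x i z : E} {ι : x ⟶ i} {p : i ⟶ z}
    (hi : S.IsProj i) (hconf : S.conf ι p) (hx : T.Rigid (SC.of S k x))
    (hsq : T.SuspSqFix (SC.of S k x)) (u : z ⟶ x) : u ∈ S.projIdeal k z x := by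
  obtain ⟨_, hT⟩ := T.conf_dtri hconf
  have hp : SC.toSC S k p ≫ SC.toSC S k u = 0 :=
    (Submodule.Quotient.mk_eq_zero _).mpr
      (by simpa using S.comp_mem_projIdeal (k := k) hi (𝟙 i) (p ≫ u))
  obtain ⟨c, hc⟩ := T.exists_comp_eq_of_comp_eq_zero (T.dtri_rot hT) _ hp
  rw [hx.eq_zero_of_suspSqFix T hsq c, comp_zero] at hc
  exact (Submodule.Quotient.mk_eq_zero _).mp hc.symm

variable (k) in
def toSLinear (w x : E) : (w ⟶ x) →ₗ[End x] S.SHom k w x where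
  toFun := S.toS k
  map_add' := map_add (S.projIdeal k w x).mkQ
  map_smul' _ _ := rfl

lemma exact_precompL_toSLinear {w i x : E} {ι : w ⟶ i} (hi : S.IsProj i)
    (hι : S.IsInflation ι) :
    (ShortComplex.mk (ModuleCat.ofHom (precompL (z := x) ι))
      (ModuleCat.ofHom (S.toSLinear k w x))
      (by ext g
          exact (Submodule.Quotient.mk_eq_zero _).mpr (S.comp_mem_projIdeal hi ι g))).Exact := by
  rw [ShortComplex.moduleCat_exact_iff]
  intro f hf
  exact S.exists_comp_eq_of_mem_projIdeal hι ((Submodule.Quotient.mk_eq_zero _).mp hf)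

lemma exact_precompL_precompL {w i z j x : E} {ι : w ⟶ i} {p : i ⟶ z} {ι' : z ⟶ j}
    (hconf : S.conf ι p) (hι' : S.IsInflation ι') (hzx : ∀ u : z ⟶ x, u ∈ S.projIdeal k z x) :
    (ShortComplex.mk (ModuleCat.ofHom (precompL (z := x) (p ≫ ι')))
      (ModuleCat.ofHom (precompL ι))
      (by ext g; simp [precompL, reassoc_of% S.conf_comp hconf])).Exact := by
  rw [ShortComplex.moduleCat_exact_iff]
  intro g hg
  obtain ⟨hcok⟩ := S.conf_isCokernel hconf
  obtain ⟨u, hu⟩ := CokernelCofork.IsColimit.desc' hcok g hg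
  obtain ⟨v, hv⟩ := S.exists_comp_eq_of_mem_projIdeal hι' (hzx u)
  exact ⟨v, by simpa [precompL, hv] using hu⟩

lemma subsingleton_atensor_hom {x w : E} (hx : S.Good x) (hw : S.IsProj w) (y : E) :
    Subsingleton (ATensor ℤ (End x) (S.SHom k x y) (w ⟶ x)) := by
  obtain ⟨ι, π, h⟩ := hx.exists_retract
  refine ATensor.subsingleton_of_smul_eq_zero (π ≫ ι) (fun m => ?_)
    (InAdd.mem_span_smul ι π h ((S.proj_iff_add w).mp hw))
  obtain ⟨f, rfl⟩ := S.toS_surjective k x y m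
  exact (Submodule.Quotient.mk_eq_zero _).mpr
    (by simpa using S.comp_mem_projIdeal S.isProj_r π (ι ≫ f))

end Frobenius

end Paper

open CategoryTheory Limits Paper in
theorem statement_9_general
    (k : Type) [Field k]
    (E : Type u) [Category.{v} E] [Preadditive E] [HasFiniteBiproducts E]
    [HasBinaryBiproducts E] [CategoryTheory.Linear k E]
    (S : Frobenius E) (T : TriData S k)
    (x y : E)
    (hgood : S.Good x)
    (hrigid : T.Rigid (SC.of S k x))
    (hsq : T.SuspSqFix (SC.of S k x)) :
    IsZero
      (((atensorFunctor (End x) (S.SHom k x y)).leftDerived 2).obj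
        (ModuleCat.of (End x) (S.SHom k x x))) := by
  obtain ⟨i₀, z, ι₀, p₀, hi₀, hconf₀⟩ := S.exists_conf_isProj x
  obtain ⟨i₁, _, ι₁, _, hi₁, hconf₁⟩ := S.exists_conf_isProj z
  have := (inAdd_self x).projective_hom
  have := (hgood.inAdd_of_isProj hi₀).projective_hom
  have := (hgood.inAdd_of_isProj hi₁).projective_hom
  have : Epi (ModuleCat.ofHom (S.toSLinear k x x)) :=
    (ModuleCat.epi_iff_surjective _).mpr (S.toS_surjective k x x)
  exact isZero_leftDerived_obj_two_of_exact
    (S.exact_precompL_precompL hconf₀ ⟨_, _, hconf₁⟩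
      (S.mem_projIdeal_of_conf T hi₀ hconf₀ hrigid hsq))
    (S.exact_precompL_toSLinear hi₀ ⟨_, _, hconf₀⟩) _
    (@ModuleCat.isZero_of_subsingleton _ _ _ (S.subsingleton_atensor_hom hgood hi₁ y))

open CategoryTheory Limits Paper in
/-- **Statement 9** (Lemma 2.6).
Let `E` be a `k`-linear Frobenius category (`k` algebraically closed) with projective
objects `add r` and stable category `C` (2-CY, Hom-finite, split idempotents: packaged
in `T`).  Let `x ∈ E` be good, `y ∈ E`, `A = E(x,x)`, `A̲ = C(x,x)`.  If `x` is rigid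
in `C` and `Σ²x ≅ x`, then `Tor₂^A(C(x,y), ₐA̲) ≅ 0`, where `Tor₂` is the second left
derived functor of the tensor product `C(x,y) ⊗_A —` of the right `A`-module `C(x,y)`
with a left `A`-module. -/
theorem statement_9
    (k : Type) [Field k] [IsAlgClosed k]
    (E : Type u) [Category.{v} E] [Preadditive E] [HasFiniteBiproducts E]
    [HasBinaryBiproducts E] [CategoryTheory.Linear k E]
    (S : Frobenius E) (T : TriData S k)
    (x y : E)
    (hgood : S.Good x)
    (hrigid : T.Rigid (SC.of S k x))
    (hsq : T.SuspSqFix (SC.of S k x)) :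
    IsZero
      (((atensorFunctor (End x) (S.SHom k x y)).leftDerived 2).obj
        (ModuleCat.of (End x) (S.SHom k x x))) :=
  statement_9_general k E S T x y hgood hrigid hsq
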